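/- arXiv:2411.07723 — 4 statements merged into one kernel-verified Lean document; each statement's English description precedes it below -/
import Mathlib

section
/- Suppose z0 ∈ Σ is a locally optimal solution of problem (MP), assumptions (A1), (A2), (A3) hold, and the continuous linear map DF(z0) : Z → E is surjective. Then for each critical direction d ∈ C0[z0], there exists no z ∈ Z satisfying simultaneously: Df(z0)z + (1/2)·D²f(z0)(d,d) < 0; DH_i(z0)z + (1/2)·D²H_i(z0)(d,d) < 0 for every index i with H_i(z0) = 0; DF(z0)z + (1/2)·D²F(z0)(d,d) = 0; and DG(z0)z + (1/2)·D²G(z0)(d,d) ∈ cone(int K − G(z0)). -/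
/-!
Along the curve `x t = z0 + t • d + t ^ 2 • z`, second-order Taylor expansion and the equation
for `F` give `F (x t) = o(t²)`. Since `DF(z0)` is surjective, the Lyusternik–Graves estimate moves
`x t` by `O(‖F (x t)‖) = o(t²)` to a zero `w t` of `F`, and the same expansions hold along `w`.
For small `t > 0` they give `f (w t) < f z0` and `H i (w t) < 0` for the active constraints,
while `G (w t) = G z0 + t τ₁ (k₁ - G z0) + t² τ₂ (k₂' - G z0)` with `k₁ ∈ K` and `k₂'` close to
an interior point of `K`, a convex combination of points of `K`. So `w t` is a feasible point
near `z0` that is strictly better than `z0`.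
-/

open Filter Topology Asymptotics Metric Set

def coneOf {W : Type*} [AddCommGroup W] [Module ℝ W] (S : Set W) (x : W) : Set W :=
  {w | ∃ t : ℝ, 0 < t ∧ ∃ s ∈ S, w = t • (s - x)}

section Taylor

variable {X : Type*} [NormedAddCommGroup X] [NormedSpace ℝ X]

theorem isLittleO_sq_of_hasDerivAt {ρ ρ' : ℝ → X} {x₀ : ℝ}
    (hρ : ∀ᶠ t in 𝓝 x₀, HasDerivAt ρ (ρ' t) t) (hρ₀ : ρ x₀ = 0) (hρ'₀ : ρ' x₀ = 0)
    (hρ' : HasDerivAt ρ' 0 x₀) :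
    ρ =o[𝓝 x₀] fun t => (t - x₀) ^ 2 := by
  obtain ⟨δ, hδ, hball⟩ := Metric.eventually_nhds_iff_ball.1 hρ
  have hρ'o : ρ' =o[𝓝[ball x₀ δ] x₀] fun t => (t - x₀) ^ 1 := by
    rw [nhdsWithin_eq_nhds.2 (ball_mem_nhds x₀ hδ)]
    simpa [hρ'₀] using hasDerivAt_iff_isLittleO.1 hρ'
  have := (convex_ball x₀ δ).isLittleO_pow_succ_real (mem_ball_self hδ)
    (fun t ht => (hball t ht).hasDerivWithinAt) hρ'o
  simpa [nhdsWithin_eq_nhds.2 (ball_mem_nhds x₀ hδ), hρ₀] using this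

variable {Z : Type*} [NormedAddCommGroup Z] [NormedSpace ℝ Z]

theorem hasDerivAt_quadraticCurve (z₀ d z : Z) (t : ℝ) :
    HasDerivAt (fun s : ℝ => z₀ + s • d + s ^ 2 • z) (d + (2 * t) • z) t :=
  ((((hasDerivAt_id t).smul_const d).const_add z₀).add
    ((hasDerivAt_pow 2 t).smul_const z)).congr_deriv (by simp)

theorem tendsto_quadraticCurve (z₀ d z : Z) :
    Tendsto (fun t : ℝ => z₀ + t • d + t ^ 2 • z) (𝓝 0) (𝓝 z₀) := by
  simpa using (by fun_prop : Continuous fun t : ℝ => z₀ + t • d + t ^ 2 • z).tendsto 0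

theorem tendsto_of_isLittleO_sub_quadraticCurve {z₀ d z : Z} {w : ℝ → Z}
    (hw : (fun t => w t - (z₀ + t • d + t ^ 2 • z)) =o[𝓝 0] fun t => t ^ 2) :
    Tendsto w (𝓝 0) (𝓝 z₀) := by
  simpa using (tendsto_quadraticCurve z₀ d z).add
    (hw.trans_tendsto (by simpa using (continuous_pow 2).tendsto (0 : ℝ)))

theorem ContDiffAt.isLittleO_comp_quadraticCurve {φ : Z → X} {z₀ : Z}
    (hφ : ContDiffAt ℝ 2 φ z₀) (d z : Z) :
    (fun t : ℝ => φ (z₀ + t • d + t ^ 2 • z) - φ z₀ - t • fderiv ℝ φ z₀ d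
      - t ^ 2 • (fderiv ℝ φ z₀ z + (1 / 2 : ℝ) • fderiv ℝ (fderiv ℝ φ) z₀ d d))
      =o[𝓝 0] fun t => t ^ 2 := by
  set c : ℝ → Z := fun t => z₀ + t • d + t ^ 2 • z
  set M := fderiv ℝ φ z₀ z + (1 / 2 : ℝ) • fderiv ℝ (fderiv ℝ φ) z₀ d d
  have hc₀ : c 0 = z₀ := by simp [c]
  have hdiff : ∀ᶠ t in 𝓝 (0 : ℝ), DifferentiableAt ℝ φ (c t) :=
    (tendsto_quadraticCurve z₀ d z).eventually
      ((hφ.eventually (by simp)).mono fun y hy => hy.differentiableAt two_ne_zero)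
  have hD2 : HasDerivAt (fun t => fderiv ℝ φ (c t)) (fderiv ℝ (fderiv ℝ φ) z₀ d) 0 := by
    have hφ' : DifferentiableAt ℝ (fderiv ℝ φ) (c 0) :=
      hc₀ ▸ (hφ.fderiv_right (m := 1) (by norm_num)).differentiableAt one_ne_zero
    exact (hφ'.hasFDerivAt.comp_hasDerivAt 0 (hasDerivAt_quadraticCurve z₀ d z 0)).congr_deriv
      (by simp [hc₀])
  refine (isLittleO_sq_of_hasDerivAt
    (ρ' := fun t => fderiv ℝ φ (c t) (d + (2 * t) • z) - fderiv ℝ φ z₀ d - (2 * t) • M)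
    ?_ ?_ ?_ ?_).congr_right (by simp)
  · filter_upwards [hdiff] with t ht
    exact ((((ht.hasFDerivAt.comp_hasDerivAt t (hasDerivAt_quadraticCurve z₀ d z t)).sub_const
      (φ z₀)).sub ((hasDerivAt_id t).smul_const _)).sub
      ((hasDerivAt_pow 2 t).smul_const M)).congr_deriv (by simp)
  · simp
  · simp [hc₀]
  · have := (hD2.clm_apply (((hasDerivAt_id (0 : ℝ)).const_mul 2).smul_const z |>.const_add d)
      |>.sub_const (fderiv ℝ φ z₀ d)).sub (((hasDerivAt_id (0 : ℝ)).const_mul 2).smul_const M)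
    refine this.congr_deriv ?_
    simp [M, hc₀]
    module

theorem HasStrictFDerivAt.isBigO_comp_sub_comp {φ : Z → X} {φ' : Z →L[ℝ] X} {z₀ : Z}
    (hφ : HasStrictFDerivAt φ φ' z₀) {α : Type*} {l : Filter α} {x w : α → Z}
    (hx : Tendsto x l (𝓝 z₀)) (hw : Tendsto w l (𝓝 z₀)) :
    (fun t => φ (w t) - φ (x t)) =O[l] fun t => w t - x t :=
  hφ.isBigO_sub.comp_tendsto (hw.prodMk_nhds hx)

theorem ContDiffAt.isLittleO_comp_of_isLittleO_sub_quadraticCurve {φ : Z → X} {z₀ : Z}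
    (hφ : ContDiffAt ℝ 2 φ z₀) {d z : Z} {w : ℝ → Z}
    (hw : (fun t => w t - (z₀ + t • d + t ^ 2 • z)) =o[𝓝 0] fun t => t ^ 2) :
    (fun t : ℝ => φ (w t) - φ z₀ - t • fderiv ℝ φ z₀ d
      - t ^ 2 • (fderiv ℝ φ z₀ z + (1 / 2 : ℝ) • fderiv ℝ (fderiv ℝ φ) z₀ d d))
      =o[𝓝 0] fun t => t ^ 2 := by
  have hφw := ((hφ.hasStrictFDerivAt two_ne_zero).isBigO_comp_sub_comp
    (tendsto_quadraticCurve z₀ d z) (tendsto_of_isLittleO_sub_quadraticCurve hw)).trans_isLittleO hw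
  exact (hφw.add (hφ.isLittleO_comp_quadraticCurve d z)).congr_left fun t => by abel

end Taylor

section Graves

variable {Z E : Type*} [NormedAddCommGroup Z] [NormedSpace ℝ Z] [CompleteSpace Z]
  [NormedAddCommGroup E] [NormedSpace ℝ E] [CompleteSpace E]
  {F : Z → E} {F' : Z →L[ℝ] E} {z₀ : Z}

theorem HasStrictFDerivAt.exists_eventually_exists_eq_dist_le (hF : HasStrictFDerivAt F F' z₀)
    (hsurj : Function.Surjective F') :
    ∃ C, ∀ᶠ x in 𝓝 z₀, ∃ w, F w = F z₀ ∧ dist w x ≤ C * ‖F x - F z₀‖ := by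
  have hrange : LinearMap.range (F' : Z →ₗ[ℝ] E) = ⊤ := LinearMap.range_eq_top.2 hsurj
  set B := F'.nonlinearRightInverseOfSurjective hrange
  have hB : 0 < B.nnnorm := F'.nonlinearRightInverseOfSurjective_nnnorm_pos hrange
  obtain ⟨s, hs, hFs⟩ := hF.approximates_deriv_on_nhds (c := B.nnnorm⁻¹ / 2) (.inr (by positivity))
  obtain ⟨r, hr, hrs⟩ := Metric.mem_nhds_iff.1 hs
  refine ⟨2 * B.nnnorm, ?_⟩
  have hsmall : Tendsto (fun x => dist x z₀ + 2 * B.nnnorm * ‖F x - F z₀‖) (𝓝 z₀) (𝓝 0) := by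
    have hFc : Tendsto F (𝓝 z₀) (𝓝 (F z₀)) := hF.continuousAt
    simpa using (tendsto_id.dist (tendsto_const_nhds (x := z₀))).add
      ((tendsto_sub_nhds_zero_iff.2 hFc).norm.const_mul (2 * (B.nnnorm : ℝ)))
  filter_upwards [hsmall.eventually_lt_const hr] with x hx
  have hball : closedBall x (2 * B.nnnorm * ‖F x - F z₀‖) ⊆ s := fun y hy =>
    hrs (mem_ball.2 (by linarith [dist_triangle y x z₀, mem_closedBall.1 hy]))
  -- with `c = ‖B‖⁻¹ / 2`, the image of this ball covers the ball of radius `‖F x - F z₀‖`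
  obtain ⟨w, hw, hFw⟩ := hFs.surjOn_closedBall_of_nonlinearRightInverse B (by positivity) hball
    (show F z₀ ∈ _ by
      rw [mem_closedBall, dist_comm, dist_eq_norm]
      push_cast
      field_simp
      norm_num)
  exact ⟨w, hFw, hw⟩

theorem HasStrictFDerivAt.exists_eq_isBigO_sub (hF : HasStrictFDerivAt F F' z₀)
    (hsurj : Function.Surjective F') {α : Type*} {l : Filter α} {x : α → Z}
    (hx : Tendsto x l (𝓝 z₀)) :
    ∃ w : α → Z, (∀ᶠ t in l, F (w t) = F z₀) ∧
      (fun t => w t - x t) =O[l] fun t => F (x t) - F z₀ := by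
  obtain ⟨C, hC⟩ := hF.exists_eventually_exists_eq_dist_le hsurj
  obtain ⟨w, hw⟩ := Filter.skolem.1 (hx.eventually hC)
  exact ⟨w, hw.mono fun t ht => ht.1,
    .of_bound C (hw.mono fun t ht => by simpa [dist_eq_norm] using ht.2)⟩

end Graves

theorem eventually_lt_of_isLittleO_sq {g : ℝ → ℝ} {g₀ a b : ℝ} (ha : a ≤ 0) (hb : b < 0)
    (hg : (fun t => g t - g₀ - t • a - t ^ 2 • b) =o[𝓝[>] 0] fun t => t ^ 2) :
    ∀ᶠ t in 𝓝[>] 0, g t < g₀ := by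
  filter_upwards [hg.def (c := -b / 2) (by linarith), self_mem_nhdsWithin] with t ht (htpos : 0 < t)
  rw [Real.norm_eq_abs, Real.norm_eq_abs, abs_of_pos (by positivity : 0 < t ^ 2)] at ht
  have hrem := (abs_le.1 ht).2
  simp only [smul_eq_mul] at hrem
  nlinarith [mul_nonpos_of_nonneg_of_nonpos htpos.le ha, mul_neg_of_pos_of_neg (pow_pos htpos 2) hb]

section Convex

variable {W : Type*}

theorem Convex.add_smul_sub_add_smul_sub_mem [AddCommGroup W] [Module ℝ W] {K : Set W}
    (hK : Convex ℝ K) {g k₁ k₂ : W} (hg : g ∈ K) (hk₁ : k₁ ∈ K) (hk₂ : k₂ ∈ K) {a b : ℝ}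
    (ha : 0 ≤ a) (hb : 0 ≤ b) (hab : a + b ≤ 1) :
    g + a • (k₁ - g) + b • (k₂ - g) ∈ K := by
  have := hK.sum_mem (t := Finset.univ) (w := ![1 - a - b, a, b]) (z := ![g, k₁, k₂])
    (by simp [Fin.forall_fin_succ]; exact ⟨by linarith, ha, hb⟩)
    (by simp [Fin.sum_univ_three]; ring)
    (by simp [Fin.forall_fin_succ, hg, hk₁, hk₂])
  convert this using 1
  simp [Fin.sum_univ_three]
  module

theorem Convex.eventually_mem_of_isLittleO [NormedAddCommGroup W] [NormedSpace ℝ W] {K : Set W}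
    (hK : Convex ℝ K) {g₀ v₁ v₂ : W} {g : ℝ → W} (hg₀ : g₀ ∈ K) (hv₁ : v₁ ∈ coneOf K g₀)
    (hv₂ : v₂ ∈ coneOf (interior K) g₀)
    (hg : (fun t => g t - g₀ - t • v₁ - t ^ 2 • v₂) =o[𝓝[>] 0] fun t => t ^ 2) :
    ∀ᶠ t in 𝓝[>] 0, g t ∈ K := by
  obtain ⟨τ₁, hτ₁, k₁, hk₁, rfl⟩ := hv₁
  obtain ⟨τ₂, hτ₂, k₂, hk₂, rfl⟩ := hv₂
  obtain ⟨ρ, hρ, hρK⟩ := Metric.mem_nhds_iff.1 (mem_interior_iff_mem_nhds.1 hk₂)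
  have hsmall : ∀ᶠ t in 𝓝[>] (0 : ℝ), t * τ₁ + t ^ 2 * τ₂ ≤ 1 :=
    (((by fun_prop : Continuous fun t : ℝ => t * τ₁ + t ^ 2 * τ₂).tendsto 0).mono_left
      nhdsWithin_le_nhds).eventually (ge_mem_nhds (by simp))
  filter_upwards [hg.def (c := ρ * τ₂ / 2) (by positivity), hsmall, self_mem_nhdsWithin]
    with t hR hab (ht : 0 < t)
  set R := g t - g₀ - t • τ₁ • (k₁ - g₀) - t ^ 2 • τ₂ • (k₂ - g₀)
  set b := t ^ 2 * τ₂
  have hb : 0 < b := by positivity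
  have hk : k₂ + b⁻¹ • R ∈ K := by
    refine hρK (mem_ball.2 ?_)
    rw [dist_self_add_left, norm_smul, Real.norm_eq_abs, abs_of_pos (inv_pos.2 hb)]
    rw [Real.norm_eq_abs, abs_of_pos (by positivity : 0 < t ^ 2)] at hR
    calc b⁻¹ * ‖R‖ ≤ b⁻¹ * (ρ * τ₂ / 2 * t ^ 2) := by gcongr
      _ = ρ / 2 := by simp only [b]; field_simp
      _ < ρ := by linarith
  -- the remainder `R` only moves `k₂` inside its ball in `K`
  have := hK.add_smul_sub_add_smul_sub_mem hg₀ hk₁ hk (by positivity) hb.le hab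
  rw [add_sub_right_comm, smul_add, smul_inv_smul₀ hb.ne'] at this
  convert this using 1
  simp only [R, b]
  module

end Convex

theorem no_solution_second_order_system_general
    {Z E W : Type*}
    [NormedAddCommGroup Z] [NormedSpace ℝ Z] [CompleteSpace Z]
    [NormedAddCommGroup E] [NormedSpace ℝ E] [CompleteSpace E]
    [NormedAddCommGroup W] [NormedSpace ℝ W]
    (m : ℕ) (f : Z → ℝ) (F : Z → E) (H : Fin m → Z → ℝ) (G : Z → W)
    (K : Set W) (hKconv : Convex ℝ K)
    (z0 : Z)
    -- z0 ∈ Σ (feasibility)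
    (hFz0 : F z0 = 0) (hHz0 : ∀ i, H i z0 ≤ 0) (hGz0 : G z0 ∈ K)
    -- local optimality
    (hopt : ∃ U ∈ nhds z0, ∀ z ∈ U,
      F z = 0 → (∀ i, H i z ≤ 0) → G z ∈ K → f z0 ≤ f z)
    -- (A2)
    (hf : ContDiffAt ℝ 2 f z0) (hF : ContDiffAt ℝ 2 F z0)
    (hH : ∀ i, ContDiffAt ℝ 2 (H i) z0) (hG : ContDiffAt ℝ 2 G z0)
    -- DF(z0) surjective
    (hsurj : Function.Surjective ⇑(fderiv ℝ F z0))
    -- d is a critical direction: d ∈ C0[z0]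
    (d : Z)
    (hd1 : fderiv ℝ f z0 d ≤ 0)
    (hd2 : fderiv ℝ F z0 d = 0)
    (hd3 : ∀ i, H i z0 = 0 → fderiv ℝ (H i) z0 d ≤ 0)
    (hd4 : fderiv ℝ G z0 d ∈ coneOf K (G z0)) :
    ¬ ∃ z : Z,
      (fderiv ℝ f z0 z + (1 / 2) * (fderiv ℝ (fderiv ℝ f) z0 d d) < 0) ∧
      (∀ i, H i z0 = 0 →
        fderiv ℝ (H i) z0 z + (1 / 2) * (fderiv ℝ (fderiv ℝ (H i)) z0 d d) < 0) ∧
      (fderiv ℝ F z0 z + (1 / 2 : ℝ) • (fderiv ℝ (fderiv ℝ F) z0 d d) = 0) ∧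
      (fderiv ℝ G z0 z + (1 / 2 : ℝ) • (fderiv ℝ (fderiv ℝ G) z0 d d)
        ∈ coneOf (interior K) (G z0)) := by
  rintro ⟨z, hzf, hzH, hzF, hzG⟩
  obtain ⟨U, hU, hUopt⟩ := hopt
  set x : ℝ → Z := fun t => z0 + t • d + t ^ 2 • z
  have hFx : (fun t => F (x t) - F z0) =o[𝓝 0] fun t => t ^ 2 := by
    refine (hF.isLittleO_comp_quadraticCurve d z).congr_left fun t => ?_
    rw [hd2, hzF, smul_zero, smul_zero, sub_zero, sub_zero]
  obtain ⟨w, hFw, hwx⟩ := (hF.hasStrictFDerivAt two_ne_zero).exists_eq_isBigO_sub hsurj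
    (tendsto_quadraticCurve z0 d z)
  replace hwx := hwx.trans_isLittleO hFx
  have hw : Tendsto w (𝓝 0) (𝓝 z0) := tendsto_of_isLittleO_sub_quadraticCurve hwx
  have hfw : ∀ᶠ t in 𝓝[>] 0, f (w t) < f z0 := eventually_lt_of_isLittleO_sq hd1 hzf
      ((hf.isLittleO_comp_of_isLittleO_sub_quadraticCurve hwx).mono nhdsWithin_le_nhds)
  have hHw : ∀ᶠ t in 𝓝[>] 0, ∀ i, H i (w t) ≤ 0 := by
    refine eventually_all.2 fun i => ?_
    rcases (hHz0 i).lt_or_eq with hi | hi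
    · exact (((hH i).continuousAt.tendsto.comp hw).eventually (gt_mem_nhds hi)).filter_mono
        nhdsWithin_le_nhds |>.mono fun t ht => ht.le
    · exact (eventually_lt_of_isLittleO_sq (hd3 i hi) (hzH i hi)
        (((hH i).isLittleO_comp_of_isLittleO_sub_quadraticCurve hwx).mono nhdsWithin_le_nhds)).mono
        fun t ht => hi ▸ ht.le
  have hGw : ∀ᶠ t in 𝓝[>] 0, G (w t) ∈ K := hKconv.eventually_mem_of_isLittleO hGz0 hd4 hzG
      ((hG.isLittleO_comp_of_isLittleO_sub_quadraticCurve hwx).mono nhdsWithin_le_nhds)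
  have hUw : ∀ᶠ t in 𝓝[>] 0, w t ∈ U := (hw.eventually hU).filter_mono nhdsWithin_le_nhds
  obtain ⟨t, hft, hHt, hGt, hUt, hFt⟩ := (hfw.and (hHw.and (hGw.and (hUw.and
    (hFw.filter_mono nhdsWithin_le_nhds))))).exists
  exact (hUopt (w t) hUt (hFt.trans hFz0) hHt hGt).not_gt hft

/-- Second-order condition: for a locally optimal solution `z0` of (MP) with (A1)-(A3) and
`DF(z0)` surjective, for each critical direction `d`, the auxiliary system has no solution. -/
theorem no_solution_second_order_system
    {Z E W : Type*}
    [NormedAddCommGroup Z] [NormedSpace ℝ Z] [CompleteSpace Z]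
    [NormedAddCommGroup E] [NormedSpace ℝ E] [CompleteSpace E]
    [NormedAddCommGroup W] [NormedSpace ℝ W] [CompleteSpace W]
    (m : ℕ) (f : Z → ℝ) (F : Z → E) (H : Fin m → Z → ℝ) (G : Z → W)
    (K : Set W) (hKconv : Convex ℝ K) (hKne : K.Nonempty)
    (z0 : Z)
    -- z0 ∈ Σ (feasibility)
    (hFz0 : F z0 = 0) (hHz0 : ∀ i, H i z0 ≤ 0) (hGz0 : G z0 ∈ K)
    -- local optimality
    (hopt : ∃ U ∈ nhds z0, ∀ z ∈ U,
      F z = 0 → (∀ i, H i z ≤ 0) → G z ∈ K → f z0 ≤ f z)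
    -- (A1)
    (hA1 : (interior K).Nonempty)
    -- (A2)
    (hf : ContDiffAt ℝ 2 f z0) (hF : ContDiffAt ℝ 2 F z0)
    (hH : ∀ i, ContDiffAt ℝ 2 (H i) z0) (hG : ContDiffAt ℝ 2 G z0)
    -- (A3)
    (hA3 : IsClosed (Set.range ⇑(fderiv ℝ F z0)))
    -- DF(z0) surjective
    (hsurj : Function.Surjective ⇑(fderiv ℝ F z0))
    -- d is a critical direction: d ∈ C0[z0]
    (d : Z)
    (hd1 : fderiv ℝ f z0 d ≤ 0)
    (hd2 : fderiv ℝ F z0 d = 0)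
    (hd3 : ∀ i, H i z0 = 0 → fderiv ℝ (H i) z0 d ≤ 0)
    (hd4 : fderiv ℝ G z0 d ∈ coneOf K (G z0)) :
    ¬ ∃ z : Z,
      (fderiv ℝ f z0 z + (1 / 2) * (fderiv ℝ (fderiv ℝ f) z0 d d) < 0) ∧
      (∀ i, H i z0 = 0 →
        fderiv ℝ (H i) z0 z + (1 / 2) * (fderiv ℝ (fderiv ℝ (H i)) z0 d d) < 0) ∧
      (fderiv ℝ F z0 z + (1 / 2 : ℝ) • (fderiv ℝ (fderiv ℝ F) z0 d d) = 0) ∧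
      (fderiv ℝ G z0 z + (1 / 2 : ℝ) • (fderiv ℝ (fderiv ℝ G) z0 d d)
        ∈ coneOf (interior K) (G z0)) :=
  no_solution_second_order_system_general m f F H G K hKconv z0 hFz0 hHz0 hGz0 hopt hf hF hH hG
    hsurj d hd1 hd2 hd3 hd4
end

section
/- Suppose z0 ∈ Σ, the maps f, F, H_i, G are Fréchet differentiable at z0, and assumption (A4) holds (in particular K has nonempty interior and DF(z0) is onto). If (λ, e*, l, w*) ∈ ℝ × E* × ℝ^m × W* is a Lagrange multiplier at z0 with λ = 0, then e* = 0, l = 0 and w* = 0. Consequently, every nonzero Lagrange multiplier at z0 has λ > 0. -/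
/-- `(lam, estar, l, wstar)` is a Lagrange multiplier at `z0`. -/
def IsLagrangeMult {Z E W : Type*}
    [NormedAddCommGroup Z] [NormedSpace ℝ Z]
    [NormedAddCommGroup E] [NormedSpace ℝ E]
    [NormedAddCommGroup W] [NormedSpace ℝ W]
    {m : ℕ} (f : Z → ℝ) (F : Z → E) (H : Fin m → Z → ℝ) (G : Z → W)
    (K : Set W) (z0 : Z)
    (lam : ℝ) (estar : E →L[ℝ] ℝ) (l : Fin m → ℝ) (wstar : W →L[ℝ] ℝ) : Prop :=
  (∀ z : Z, lam * fderiv ℝ f z0 z + estar (fderiv ℝ F z0 z)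
      + (∑ i, l i * fderiv ℝ (H i) z0 z) + wstar (fderiv ℝ G z0 z) = 0) ∧
  0 ≤ lam ∧ (∀ i, 0 ≤ l i ∧ l i * H i z0 = 0) ∧
  (∀ s ∈ K, wstar (s - G z0) ≤ 0)

/-- Under (A4), a Lagrange multiplier at `z0` with `λ = 0` vanishes entirely; consequently
every nonzero Lagrange multiplier has `λ > 0`. -/
theorem multiplier_lambda_zero_implies_zero
    {Z E W : Type*}
    [NormedAddCommGroup Z] [NormedSpace ℝ Z] [CompleteSpace Z]
    [NormedAddCommGroup E] [NormedSpace ℝ E] [CompleteSpace E]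
    [NormedAddCommGroup W] [NormedSpace ℝ W] [CompleteSpace W]
    (m : ℕ) (f : Z → ℝ) (F : Z → E) (H : Fin m → Z → ℝ) (G : Z → W)
    (K : Set W) (hKconv : Convex ℝ K) (hKne : K.Nonempty)
    (hKint : (interior K).Nonempty)
    (z0 : Z)
    -- z0 ∈ Σ (feasibility)
    (hFz0 : F z0 = 0) (hHz0 : ∀ i, H i z0 ≤ 0) (hGz0 : G z0 ∈ K)
    -- differentiability at z0
    (hf : DifferentiableAt ℝ f z0) (hF : DifferentiableAt ℝ F z0)
    (hH : ∀ i, DifferentiableAt ℝ (H i) z0) (hG : DifferentiableAt ℝ G z0)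
    -- (A4)
    (hsurj : Function.Surjective ⇑(fderiv ℝ F z0))
    (hMF : ∃ zt : Z, fderiv ℝ F z0 zt = 0 ∧
      (∀ i, H i z0 + fderiv ℝ (H i) z0 zt < 0) ∧
      G z0 + fderiv ℝ G z0 zt ∈ interior K) :
    (∀ (estar : E →L[ℝ] ℝ) (l : Fin m → ℝ) (wstar : W →L[ℝ] ℝ),
      IsLagrangeMult f F H G K z0 0 estar l wstar →
      estar = 0 ∧ l = 0 ∧ wstar = 0) ∧
    (∀ (lam : ℝ) (estar : E →L[ℝ] ℝ) (l : Fin m → ℝ) (wstar : W →L[ℝ] ℝ),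
      IsLagrangeMult f F H G K z0 lam estar l wstar →
      ¬ (lam = 0 ∧ estar = 0 ∧ l = 0 ∧ wstar = 0) →
      0 < lam) := by
  obtain ⟨zt, hzt0, hzti, hztK⟩ := hMF
  have main : ∀ (estar : E →L[ℝ] ℝ) (l : Fin m → ℝ) (wstar : W →L[ℝ] ℝ),
      IsLagrangeMult f F H G K z0 0 estar l wstar →
      estar = 0 ∧ l = 0 ∧ wstar = 0 := by
    intro estar l wstar ⟨hstat, _, hl, hNC⟩
    -- evaluate stationarity at zt
    have hzt := hstat zt
    rw [hzt0] at hzt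
    simp only [zero_mul, zero_add, map_zero] at hzt
    -- each term nonpositive
    have hterm : ∀ i ∈ Finset.univ, l i * fderiv ℝ (H i) z0 zt ≤ 0 := by
      intro i _
      rcases (hl i).1.lt_or_eq with hlt | heq
      · nlinarith [hzti i, (hl i).2]
      · simp [← heq]
    have hw0 : wstar (fderiv ℝ G z0 zt) ≤ 0 := by
      have := hNC _ (interior_subset hztK)
      simpa using this
    have hsum0 : ∑ i, l i * fderiv ℝ (H i) z0 zt = 0 := by
      have h1 := Finset.sum_nonpos hterm
      linarith
    have hweq : wstar (fderiv ℝ G z0 zt) = 0 := by linarith [hsum0 ▸ hzt]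
    -- l = 0
    have hl0 : l = 0 := by
      funext i
      have := (Finset.sum_eq_zero_iff_of_nonpos hterm).1 hsum0 i (Finset.mem_univ i)
      rcases (hl i).1.lt_or_eq with hlt | heq
      · nlinarith [hzti i, (hl i).2]
      · simpa using heq.symm
    -- wstar = 0
    have hwle : ∀ w : W, wstar w ≤ 0 := by
      intro w
      set s0 := G z0 + fderiv ℝ G z0 zt with hs0
      have hcont : ContinuousAt (fun t : ℝ => s0 + t • w) 0 := by fun_prop
      have hmem : ∀ᶠ t in nhds (0 : ℝ), s0 + t • w ∈ interior K := by
        apply hcont.eventually_mem (isOpen_interior.mem_nhds ?_)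
        simpa using hztK
      have hev : ∀ᶠ t in nhdsWithin (0:ℝ) (Set.Ioi 0),
          s0 + t • w ∈ interior K ∧ t ∈ Set.Ioi (0:ℝ) :=
        (hmem.filter_mono nhdsWithin_le_nhds).and self_mem_nhdsWithin
      obtain ⟨t, htK, htpos⟩ := hev.exists
      have := hNC _ (interior_subset htK)
      have ht : (0:ℝ) < t := htpos
      have h3 : s0 + t • w - G z0 = fderiv ℝ G z0 zt + t • w := by rw [hs0]; abel
      rw [h3, map_add, map_smul, hweq] at this
      simp only [smul_eq_mul, zero_add] at this
      nlinarith
    have hw0' : wstar = 0 := by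
      ext w
      have h1 := hwle w
      have h2 := hwle (-w)
      simp only [map_neg] at h2
      simp only [ContinuousLinearMap.zero_apply]
      linarith
    -- estar = 0
    refine ⟨?_, hl0, hw0'⟩
    ext e
    obtain ⟨z, hz⟩ := hsurj e
    have := hstat z
    rw [hz, hl0, hw0'] at this
    simpa using this
  refine ⟨main, ?_⟩
  intro lam estar l wstar hLM hne
  rcases hLM.2.1.lt_or_eq with hlt | heq
  · exact hlt
  · exfalso
    apply hne
    have h0 : IsLagrangeMult f F H G K z0 0 estar l wstar := heq ▸ hLM
    obtain ⟨h1, h2, h3⟩ := main estar l wstar h0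
    exact ⟨heq.symm, h1, h2, h3⟩
end

section
/- The set S := {(μ, γ, e, w) ∈ ℝ × ℝ^k × E × W : there exists z ∈ Z with a(z) + α < μ, b_j(z) + β_j < γ_j for all j = 1,…,k, T_E(z) + e₀ = e, and T_W(z) + w₀ − w ∈ cone(int K − g₀)} is convex and open in ℝ × ℝ^k × E × W. -/
/-- The auxiliary set `S` appearing in the separation argument. -/
def auxSet {Z E W : Type*}
    [NormedAddCommGroup Z] [NormedSpace ℝ Z]
    [NormedAddCommGroup E] [NormedSpace ℝ E]
    [NormedAddCommGroup W] [NormedSpace ℝ W]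
    (k : ℕ) (a : Z →L[ℝ] ℝ) (b : Fin k → Z →L[ℝ] ℝ)
    (TE : Z →L[ℝ] E) (TW : Z →L[ℝ] W)
    (α : ℝ) (β : Fin k → ℝ) (e₀ : E) (w₀ : W)
    (K : Set W) (g₀ : W) : Set (ℝ × (Fin k → ℝ) × E × W) :=
  {p | ∃ z : Z,
    a z + α < p.1 ∧
    (∀ j, b j z + β j < p.2.1 j) ∧
    TE z + e₀ = p.2.2.1 ∧
    TW z + w₀ - p.2.2.2 ∈ coneOf (interior K) g₀}

section coneOf

open scoped Pointwise

variable {W : Type*} [AddCommGroup W] [Module ℝ W] {S : Set W} {x w : W}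

theorem mem_coneOf_iff : w ∈ coneOf S x ↔ ∃ t : ℝ, 0 < t ∧ x + t • w ∈ S := by
  constructor
  · rintro ⟨t, ht, s, hs, rfl⟩
    refine ⟨t⁻¹, inv_pos.2 ht, ?_⟩
    rwa [inv_smul_smul₀ ht.ne', add_sub_cancel]
  · rintro ⟨t, ht, hS⟩
    refine ⟨t⁻¹, inv_pos.2 ht, _, hS, ?_⟩
    rw [add_sub_cancel_left, inv_smul_smul₀ ht.ne']

theorem coneOf_eq_hull (hS : Convex ℝ S) (x : W) :
    coneOf S x = ConvexCone.hull ℝ (-x +ᵥ S) := by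
  ext w
  rw [SetLike.mem_coe, ConvexCone.mem_hull_of_convex (hS.vadd (-x))]
  simp only [coneOf, Set.mem_ofPred_eq, Set.mem_smul_set, Set.mem_vadd_set, vadd_eq_add,
    exists_exists_and_eq_and, neg_add_eq_sub, eq_comm (b := w)]

theorem Convex.coneOf (hS : Convex ℝ S) (x : W) : Convex ℝ (coneOf S x) :=
  coneOf_eq_hull hS x ▸ ConvexCone.convex _

theorem IsOpen.coneOf [TopologicalSpace W] [IsTopologicalAddGroup W] [ContinuousSMul ℝ W]
    (hS : IsOpen S) (x : W) : IsOpen (_root_.coneOf S x) := by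
  have : _root_.coneOf S x = ⋃ t ∈ Set.Ioi (0 : ℝ), (fun w => x + t • w) ⁻¹' S := by
    ext w
    simp only [mem_coneOf_iff, Set.mem_iUnion, Set.mem_preimage, Set.mem_Ioi, exists_prop]
  rw [this]
  exact isOpen_biUnion fun t _ => hS.preimage (by fun_prop)

end coneOf

theorem Convex.combo_map_add_sub_mem {𝕜 Z F : Type*} [CommRing 𝕜] [PartialOrder 𝕜]
    [AddCommGroup Z] [Module 𝕜 Z] [AddCommGroup F] [Module 𝕜 F] {C : Set F} (hC : Convex 𝕜 C)
    (f : Z →ₗ[𝕜] F) (c : F) {x y : Z} {u v : F} (hx : f x + c - u ∈ C) (hy : f y + c - v ∈ C)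
    {s t : 𝕜} (hs : 0 ≤ s) (ht : 0 ≤ t) (hst : s + t = 1) :
    f (s • x + t • y) + c - (s • u + t • v) ∈ C := by
  convert hC hx hy hs ht hst using 1
  simp only [map_add, map_smul]
  linear_combination (norm := module) (-hst) • c

section auxSet

variable {Z E W : Type*} [NormedAddCommGroup Z] [NormedSpace ℝ Z]
  [NormedAddCommGroup E] [NormedSpace ℝ E] [NormedAddCommGroup W] [NormedSpace ℝ W]
  {k : ℕ} {a : Z →L[ℝ] ℝ} {b : Fin k → Z →L[ℝ] ℝ} {TE : Z →L[ℝ] E} {TW : Z →L[ℝ] W}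
  {α : ℝ} {β : Fin k → ℝ} {e₀ : E} {w₀ : W} {K : Set W} {g₀ : W}

theorem convex_auxSet (hK : Convex ℝ K) : Convex ℝ (auxSet k a b TE TW α β e₀ w₀ K g₀) := by
  rintro p ⟨z, hμ, hγ, he, hw⟩ q ⟨z', hμ', hγ', he', hw'⟩ s t hs ht hst
  refine ⟨s • z + t • z', ?_, fun j => ?_, ?_, ?_⟩
  · exact sub_neg.1 <| (convex_Iio 0).combo_map_add_sub_mem a.toLinearMap α
      (sub_neg.2 hμ) (sub_neg.2 hμ') hs ht hst
  · exact sub_neg.1 <| (convex_Iio 0).combo_map_add_sub_mem (b j).toLinearMap (β j)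
      (sub_neg.2 (hγ j)) (sub_neg.2 (hγ' j)) hs ht hst
  · exact sub_eq_zero.1 <| (convex_singleton 0).combo_map_add_sub_mem TE.toLinearMap e₀
      (sub_eq_zero.2 he) (sub_eq_zero.2 he') hs ht hst
  · exact (hK.interior.coneOf g₀).combo_map_add_sub_mem TW.toLinearMap w₀ hw hw' hs ht hst

theorem isOpen_auxSet [CompleteSpace Z] [CompleteSpace E] (hTE : Function.Surjective TE) :
    IsOpen (auxSet k a b TE TW α β e₀ w₀ K g₀) := by
  let O : Set (ℝ × (Fin k → ℝ) × Z × W) := {q | a q.2.2.1 + α < q.1 ∧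
    (∀ j, b j q.2.2.1 + β j < q.2.1 j) ∧ TW q.2.2.1 + w₀ - q.2.2.2 ∈ coneOf (interior K) g₀}
  let G : ℝ × (Fin k → ℝ) × Z × W → ℝ × (Fin k → ℝ) × E × W :=
    Prod.map id (Prod.map id (Prod.map (fun z => TE z + e₀) id))
  have hO : IsOpen O := by
    simp only [O, Set.ofPred_and, Set.ofPred_forall]
    exact (isOpen_lt (by fun_prop) (by fun_prop)).inter <|
      (isOpen_iInter_of_finite fun j => isOpen_lt (by fun_prop) (by fun_prop)).inter <|
      (isOpen_interior.coneOf g₀).preimage (by fun_prop)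
  have hG : IsOpenMap G := IsOpenMap.id.prodMap <| IsOpenMap.id.prodMap <|
    ((isOpenMap_add_right e₀).comp (TE.isOpenMap hTE)).prodMap IsOpenMap.id
  have hS : auxSet k a b TE TW α β e₀ w₀ K g₀ = G '' O := by
    ext ⟨μ, γ, e, w⟩
    constructor
    · rintro ⟨z, hμ, hγ, rfl, hw⟩
      exact ⟨(μ, γ, z, w), ⟨hμ, hγ, hw⟩, rfl⟩
    · rintro ⟨⟨μ, γ, z, w⟩, ⟨hμ, hγ, hw⟩, hp⟩
      simp only [G, Prod.map, id, Prod.mk.injEq] at hp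
      obtain ⟨rfl, rfl, rfl, rfl⟩ := hp
      exact ⟨z, hμ, hγ, rfl, hw⟩
  exact hS ▸ hG O hO

end auxSet

theorem auxSet_convex_and_open_general
    {Z E W : Type*}
    [NormedAddCommGroup Z] [NormedSpace ℝ Z] [CompleteSpace Z]
    [NormedAddCommGroup E] [NormedSpace ℝ E] [CompleteSpace E]
    [NormedAddCommGroup W] [NormedSpace ℝ W]
    (k : ℕ) (a : Z →L[ℝ] ℝ) (b : Fin k → Z →L[ℝ] ℝ)
    (TE : Z →L[ℝ] E) (hTE : Function.Surjective ⇑TE)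
    (TW : Z →L[ℝ] W)
    (α : ℝ) (β : Fin k → ℝ) (e₀ : E) (w₀ : W)
    (K : Set W) (hKconv : Convex ℝ K)
    (g₀ : W) :
    Convex ℝ (auxSet k a b TE TW α β e₀ w₀ K g₀) ∧
    IsOpen (auxSet k a b TE TW α β e₀ w₀ K g₀) :=
  ⟨convex_auxSet hKconv, isOpen_auxSet hTE⟩

/-- The auxiliary set `S` is convex and open. -/
theorem auxSet_convex_and_open
    {Z E W : Type*}
    [NormedAddCommGroup Z] [NormedSpace ℝ Z] [CompleteSpace Z]
    [NormedAddCommGroup E] [NormedSpace ℝ E] [CompleteSpace E]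
    [NormedAddCommGroup W] [NormedSpace ℝ W] [CompleteSpace W]
    (k : ℕ) (a : Z →L[ℝ] ℝ) (b : Fin k → Z →L[ℝ] ℝ)
    (TE : Z →L[ℝ] E) (hTE : Function.Surjective ⇑TE)
    (TW : Z →L[ℝ] W)
    (α : ℝ) (β : Fin k → ℝ) (e₀ : E) (w₀ : W)
    (K : Set W) (hKconv : Convex ℝ K) (hKint : (interior K).Nonempty)
    (g₀ : W) (hg₀ : g₀ ∈ K) :
    Convex ℝ (auxSet k a b TE TW α β e₀ w₀ K g₀) ∧
    IsOpen (auxSet k a b TE TW α β e₀ w₀ K g₀) :=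
  auxSet_convex_and_open_general k a b TE hTE TW α β e₀ w₀ K hKconv g₀
end

section
/- Suppose (λ, l, e*, w*) ∈ ℝ × ℝ^k × E* × W* satisfies λμ + Σ_{j=1}^k l_j·γ_j + ⟨e*, e⟩ + ⟨w*, w⟩ ≥ 0 for every (μ, γ, e, w) ∈ S, where S := {(μ, γ, e, w) : there exists z ∈ Z with a(z) + α < μ, b_j(z) + β_j < γ_j for all j, T_E(z) + e₀ = e, and T_W(z) + w₀ − w ∈ cone(int K − g₀)}. Then: λ ≥ 0; l_j ≥ 0 for all j; λ·a + Σ_j l_j·b_j + e*∘T_E + w*∘T_W = 0 in Z*; ⟨w*, w'⟩ ≤ 0 for all w' ∈ cone(K − g₀) (i.e. w* ∈ N(K, g₀)); and λα + Σ_j l_j·β_j + ⟨e*, e₀⟩ + ⟨w*, w₀⟩ ≥ 0. -/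
open Filter Topology

theorem nonneg_of_forall_pos_le_add_mul {A B : ℝ} (h : ∀ t > 0, 0 ≤ A + t * B) : 0 ≤ A := by
  have hlim : Tendsto (fun t : ℝ => A + t * B) (𝓝[>] 0) (𝓝 A) := by
    refine tendsto_nhdsWithin_of_tendsto_nhds ?_
    simpa using ((continuous_id.mul continuous_const).const_add A).tendsto (0 : ℝ)
  exact ge_of_tendsto hlim (eventually_nhdsWithin_of_forall h)

theorem slope_nonneg_of_forall_pos_le_add_mul {A B : ℝ} (h : ∀ t > 0, 0 ≤ A + t * B) :
    0 ≤ B := by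
  refine nonneg_of_forall_pos_le_add_mul (B := A) fun t ht => ?_
  have := mul_nonneg ht.le (h t⁻¹ (inv_pos.2 ht))
  rw [mul_add, ← mul_assoc, mul_inv_cancel₀ ht.ne', one_mul] at this
  linarith

theorem slope_eq_zero_of_forall_le_add_mul {A B : ℝ} (h : ∀ t : ℝ, 0 ≤ A + t * B) : B = 0 := by
  refine le_antisymm ?_ (slope_nonneg_of_forall_pos_le_add_mul fun t _ => h t)
  have : 0 ≤ -B := slope_nonneg_of_forall_pos_le_add_mul fun t _ => by
    simpa using h (-t)
  linarith

theorem Convex.forall_le_of_forall_mem_interior_le {W : Type*} [AddCommGroup W] [Module ℝ W]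
    [TopologicalSpace W] [IsTopologicalAddGroup W] [ContinuousSMul ℝ W] {K : Set W}
    (hK : Convex ℝ K) (hKint : (interior K).Nonempty)
    {f : W → ℝ} (hf : Continuous f) {c : ℝ} (h : ∀ s ∈ interior K, f s ≤ c) :
    ∀ s ∈ K, f s ≤ c := by
  intro s hs
  have hs' : s ∈ closure (interior K) := by
    rw [hK.closure_interior_eq_closure_of_nonempty_interior hKint]
    exact subset_closure hs
  exact closure_minimal h (isClosed_le hf continuous_const) hs'

section
variable {Z E W : Type*}
    [NormedAddCommGroup Z] [NormedSpace ℝ Z]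
    [NormedAddCommGroup E] [NormedSpace ℝ E]
    [NormedAddCommGroup W] [NormedSpace ℝ W]
    {k : ℕ} {a : Z →L[ℝ] ℝ} {b : Fin k → Z →L[ℝ] ℝ}
    {TE : Z →L[ℝ] E} {TW : Z →L[ℝ] W}
    {α : ℝ} {β : Fin k → ℝ} {e₀ : E} {w₀ : W}
    {K : Set W} {g₀ : W}

def pairing (lam : ℝ) (l : Fin k → ℝ) (estar : E →L[ℝ] ℝ) (wstar : W →L[ℝ] ℝ)
    (p : ℝ × (Fin k → ℝ) × E × W) : ℝ :=
  lam * p.1 + (∑ j, l j * p.2.1 j) + estar p.2.2.1 + wstar p.2.2.2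

variable {lam : ℝ} {l : Fin k → ℝ} {estar : E →L[ℝ] ℝ} {wstar : W →L[ℝ] ℝ}

theorem mk_mem_auxSet (z : Z) {ε₀ : ℝ} {ε : Fin k → ℝ} {c : W} (hε₀ : 0 < ε₀)
    (hε : ∀ j, 0 < ε j) (hc : c ∈ coneOf (interior K) g₀) :
    (a z + α + ε₀, fun j => b j z + β j + ε j, TE z + e₀, TW z + w₀ - c) ∈
      auxSet k a b TE TW α β e₀ w₀ K g₀ :=
  ⟨z, by linarith, fun j => by linarith [hε j], rfl, by rwa [sub_sub_cancel]⟩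

namespace auxSet

theorem sub_le_pairing
    (hsep : ∀ p ∈ auxSet k a b TE TW α β e₀ w₀ K g₀, 0 ≤ pairing lam l estar wstar p)
    (z : Z) {ε₀ : ℝ} {ε : Fin k → ℝ} {c : W} (hε₀ : 0 < ε₀)
    (hε : ∀ j, 0 < ε j) (hc : c ∈ coneOf (interior K) g₀) :
    wstar c - lam * ε₀ - ∑ j, l j * ε j ≤
      pairing lam l estar wstar (a z, fun j => b j z, TE z, TW z) +
        pairing lam l estar wstar (α, β, e₀, w₀) := by
  have h := hsep _ (mk_mem_auxSet z hε₀ hε hc)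
  simp only [pairing, map_add, map_sub, mul_add, Finset.sum_add_distrib] at h ⊢
  linarith

theorem pairing_add_nonneg
    (hsep : ∀ p ∈ auxSet k a b TE TW α β e₀ w₀ K g₀, 0 ≤ pairing lam l estar wstar p)
    (hKint : (interior K).Nonempty) (z : Z) :
    0 ≤ pairing lam l estar wstar (a z, fun j => b j z, TE z, TW z) +
      pairing lam l estar wstar (α, β, e₀, w₀) := by
  obtain ⟨s₀, hs₀⟩ := hKint
  refine nonneg_of_forall_pos_le_add_mul (B := lam + ∑ j, l j - wstar (s₀ - g₀)) fun t ht => ?_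
  have := sub_le_pairing hsep z ht (fun _ => ht) ⟨t, ht, s₀, hs₀, rfl⟩
  simp only [map_smul, smul_eq_mul, ← Finset.sum_mul] at this
  linarith

theorem pairing_eq_zero
    (hsep : ∀ p ∈ auxSet k a b TE TW α β e₀ w₀ K g₀, 0 ≤ pairing lam l estar wstar p)
    (hKint : (interior K).Nonempty) (z : Z) :
    pairing lam l estar wstar (a z, fun j => b j z, TE z, TW z) = 0 := by
  refine slope_eq_zero_of_forall_le_add_mul
    (A := pairing lam l estar wstar (α, β, e₀, w₀)) fun r => ?_
  have hsmul : pairing lam l estar wstar (a (r • z), fun j => b j (r • z), TE (r • z), TW (r • z))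
      = r * pairing lam l estar wstar (a z, fun j => b j z, TE z, TW z) := by
    simp only [pairing, map_smul, smul_eq_mul, mul_left_comm _ r, ← Finset.mul_sum]
    ring
  linarith [pairing_add_nonneg hsep hKint (r • z)]

theorem lam_nonneg
    (hsep : ∀ p ∈ auxSet k a b TE TW α β e₀ w₀ K g₀, 0 ≤ pairing lam l estar wstar p)
    (hKint : (interior K).Nonempty) : 0 ≤ lam := by
  obtain ⟨s₀, hs₀⟩ := hKint
  refine slope_nonneg_of_forall_pos_le_add_mul (A := pairing lam l estar wstar (α, β, e₀, w₀) +
    lam + ∑ j, l j - wstar (s₀ - g₀)) fun t ht => ?_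
  have := sub_le_pairing hsep 0 (ε₀ := 1 + t) (by positivity) (fun _ => one_pos)
    ⟨1, one_pos, s₀, hs₀, (one_smul _ _).symm⟩
  simp only [pairing, map_zero, mul_zero, Finset.sum_const_zero, mul_one] at this ⊢
  linarith

theorem l_nonneg
    (hsep : ∀ p ∈ auxSet k a b TE TW α β e₀ w₀ K g₀, 0 ≤ pairing lam l estar wstar p)
    (hKint : (interior K).Nonempty) (j : Fin k) : 0 ≤ l j := by
  obtain ⟨s₀, hs₀⟩ := hKint
  refine slope_nonneg_of_forall_pos_le_add_mul (A := pairing lam l estar wstar (α, β, e₀, w₀) +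
    lam + ∑ j, l j - wstar (s₀ - g₀)) fun t ht => ?_
  have hsingle := (Pi.single_nonneg.2 zero_le_one : (0 : Fin k → ℝ) ≤ Pi.single j 1)
  have := sub_le_pairing hsep 0 (ε := fun i => 1 + t * (Pi.single j 1 : Fin k → ℝ) i) one_pos
    (fun i => add_pos_of_pos_of_nonneg one_pos (mul_nonneg ht.le (hsingle i)))
    ⟨1, one_pos, s₀, hs₀, (one_smul _ _).symm⟩
  simp only [pairing, map_zero, mul_zero, Finset.sum_const_zero, mul_one, mul_add,
    Finset.sum_add_distrib, Pi.single_apply, mul_ite, Finset.sum_ite_eq', Finset.mem_univ,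
    if_true] at this ⊢
  linarith [mul_comm t (l j)]

theorem wstar_le_of_mem_interior
    (hsep : ∀ p ∈ auxSet k a b TE TW α β e₀ w₀ K g₀, 0 ≤ pairing lam l estar wstar p)
    {s : W} (hs : s ∈ interior K) : wstar s ≤ wstar g₀ := by
  have : 0 ≤ -wstar (s - g₀) := slope_nonneg_of_forall_pos_le_add_mul
    (A := pairing lam l estar wstar (α, β, e₀, w₀) + lam + ∑ j, l j) fun t ht => by
      have := sub_le_pairing hsep 0 one_pos (fun _ => one_pos) ⟨t, ht, s, hs, rfl⟩
      simp only [pairing, map_zero, mul_zero, Finset.sum_const_zero, mul_one, map_smul,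
        smul_eq_mul] at this ⊢
      linarith
  rw [map_sub] at this
  linarith

end auxSet

end

theorem separation_consequences_general
    {Z E W : Type*}
    [NormedAddCommGroup Z] [NormedSpace ℝ Z]
    [NormedAddCommGroup E] [NormedSpace ℝ E]
    [NormedAddCommGroup W] [NormedSpace ℝ W]
    (k : ℕ) (a : Z →L[ℝ] ℝ) (b : Fin k → Z →L[ℝ] ℝ)
    (TE : Z →L[ℝ] E) (TW : Z →L[ℝ] W)
    (α : ℝ) (β : Fin k → ℝ) (e₀ : E) (w₀ : W)
    (K : Set W) (hKconv : Convex ℝ K) (hKint : (interior K).Nonempty)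
    (g₀ : W)
    (lam : ℝ) (l : Fin k → ℝ) (estar : E →L[ℝ] ℝ) (wstar : W →L[ℝ] ℝ)
    (hsep : ∀ p ∈ auxSet k a b TE TW α β e₀ w₀ K g₀,
      0 ≤ lam * p.1 + (∑ j, l j * p.2.1 j) + estar p.2.2.1 + wstar p.2.2.2) :
    0 ≤ lam ∧
    (∀ j, 0 ≤ l j) ∧
    (∀ z : Z, lam * a z + (∑ j, l j * b j z) + estar (TE z) + wstar (TW z) = 0) ∧
    (∀ w' ∈ coneOf K g₀, wstar w' ≤ 0) ∧
    0 ≤ lam * α + (∑ j, l j * β j) + estar e₀ + wstar w₀ := by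
  refine ⟨auxSet.lam_nonneg hsep hKint, auxSet.l_nonneg hsep hKint,
    auxSet.pairing_eq_zero hsep hKint, ?_, ?_⟩
  · rintro _ ⟨t, ht, s, hs, rfl⟩
    have := hKconv.forall_le_of_forall_mem_interior_le hKint wstar.continuous
      (fun _ => auxSet.wstar_le_of_mem_interior hsep) s hs
    rw [map_smul, map_sub, smul_eq_mul]
    exact mul_nonpos_of_nonneg_of_nonpos ht.le (by linarith)
  · simpa [pairing] using auxSet.pairing_add_nonneg hsep hKint 0

/-- Consequences of a linear functional being nonnegative on the auxiliary set `S`. -/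
theorem separation_consequences
    {Z E W : Type*}
    [NormedAddCommGroup Z] [NormedSpace ℝ Z] [CompleteSpace Z]
    [NormedAddCommGroup E] [NormedSpace ℝ E] [CompleteSpace E]
    [NormedAddCommGroup W] [NormedSpace ℝ W] [CompleteSpace W]
    (k : ℕ) (a : Z →L[ℝ] ℝ) (b : Fin k → Z →L[ℝ] ℝ)
    (TE : Z →L[ℝ] E) (TW : Z →L[ℝ] W)
    (α : ℝ) (β : Fin k → ℝ) (e₀ : E) (w₀ : W)
    (K : Set W) (hKconv : Convex ℝ K) (hKint : (interior K).Nonempty)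
    (g₀ : W) (hg₀ : g₀ ∈ K)
    (lam : ℝ) (l : Fin k → ℝ) (estar : E →L[ℝ] ℝ) (wstar : W →L[ℝ] ℝ)
    (hsep : ∀ p ∈ auxSet k a b TE TW α β e₀ w₀ K g₀,
      0 ≤ lam * p.1 + (∑ j, l j * p.2.1 j) + estar p.2.2.1 + wstar p.2.2.2) :
    0 ≤ lam ∧
    (∀ j, 0 ≤ l j) ∧
    (∀ z : Z, lam * a z + (∑ j, l j * b j z) + estar (TE z) + wstar (TW z) = 0) ∧
    (∀ w' ∈ coneOf K g₀, wstar w' ≤ 0) ∧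
    0 ≤ lam * α + (∑ j, l j * β j) + estar e₀ + wstar w₀ :=
  separation_consequences_general k a b TE TW α β e₀ w₀ K hKconv hKint g₀ lam l estar wstar hsep
end
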